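/- The matrix Z^d satisfies the conjugation identity A + B - D⁻¹ S̄ S⁻¹ D = Z^d, where A = diag(a_i), B = diag(m_{ii}) with m_{ii} = Q_i Σ_{s≠i} 1/(Q_i - Q_s), D = diag(∏_{s≠i}(Q_i - Q_s)), S the Vandermonde matrix S_{ij} = Q_i^{j-1}, and S̄_{ij} = (j-1)Q_i^{j-1}. -/

import Mathlib

/-! Conjugating by `D` turns `A + B - Z^d` into `diag(Q) L`, where `L i k = ℓ_k'(Q_i)` is the
derivative of the `k`-th Lagrange basis polynomial at the node `Q_i`. Interpolation on `N` nodes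
reproduces polynomials of degree `< N`, so `L` maps the values of `X^j` at the nodes to those of
`j X^(j-1)`: `diag(Q) L` is the Euler operator `x d/dx` in the monomial basis, and
`diag(Q) L S = S̄`. -/

open Matrix Finset Polynomial

namespace Lagrange

variable {F ι : Type*} [Field F] [DecidableEq ι] {s : Finset ι} {v : ι → F} {i k : ι}

theorem basis_eq_C_nodalWeight_mul_nodal_erase (hi : i ∈ s) :
    Lagrange.basis s v i = C (nodalWeight s v i) * nodal (s.erase i) v := by
  rw [basis_eq_prod_sub_inv_mul_nodal_div hi, nodal_erase_eq_nodal_div hi]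

theorem eval_nodal_erase_of_ne {x : F} (hi : i ∈ s) (hx : x ≠ v i) :
    eval x (nodal (s.erase i) v) = eval x (nodal s v) / (x - v i) := by
  rw [nodal_eq_mul_nodal_erase hi, eval_mul, eval_sub, eval_X, eval_C,
    mul_div_cancel_left₀ _ (sub_ne_zero.2 hx)]

theorem prod_erase_sub_ne_zero (hvs : Set.InjOn v s) (hi : i ∈ s) :
    ∏ j ∈ s.erase i, (v i - v j) ≠ 0 :=
  prod_ne_zero_iff.2 fun _ hj =>
    sub_ne_zero.2 fun h => (mem_erase.1 hj).1 (hvs (mem_erase.1 hj).2 hi h.symm)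

theorem eval_derivative_basis_self (hvs : Set.InjOn v s) (hi : i ∈ s) :
    eval (v i) (derivative (Lagrange.basis s v i)) = ∑ j ∈ s.erase i, (v i - v j)⁻¹ := by
  have hne : ∀ j ∈ s.erase i, v i ≠ v j := fun j hj =>
    fun h => (mem_erase.1 hj).1 (hvs (mem_erase.1 hj).2 hi h.symm)
  rw [basis_eq_C_nodalWeight_mul_nodal_erase hi, derivative_C_mul, derivative_nodal, eval_mul,
    eval_C, eval_finsetSum, nodalWeight_eq_eval_nodal_erase_inv, mul_sum]
  refine sum_congr rfl fun j hj => ?_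
  have hω : eval (v i) (nodal (s.erase i) v) ≠ 0 := eval_nodal_not_at_node hne
  rw [eval_nodal_erase_of_ne hj (hne j hj), div_eq_mul_inv, inv_mul_cancel_left₀ hω]

theorem eval_derivative_basis_of_ne (hvs : Set.InjOn v s) (hi : i ∈ s) (hk : k ∈ s)
    (hik : i ≠ k) :
    eval (v i) (derivative (Lagrange.basis s v k)) =
      (∏ j ∈ s.erase i, (v i - v j)) / ((v i - v k) * ∏ j ∈ s.erase k, (v k - v j)) := by
  have hvik : v i ≠ v k := fun h => hik (hvs hi hk h)
  rw [basis_eq_C_nodalWeight_mul_nodal_erase hk, derivative_C_mul, eval_mul, eval_C,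
    eval_nodal_derivative_eval_node_eq (mem_erase.2 ⟨hik, hi⟩), erase_right_comm,
    eval_nodal_erase_of_ne (mem_erase.2 ⟨hik.symm, hk⟩) hvik, eval_nodal, nodalWeight,
    prod_inv_distrib]
  field_simp

theorem eval_derivative_eq_sum (hvs : Set.InjOn v s) {p : F[X]} (hp : p.degree < #s) (x : F) :
    eval x (derivative p) =
      ∑ k ∈ s, eval (v k) p * eval x (derivative (Lagrange.basis s v k)) := by
  conv_lhs => rw [eq_interpolate hvs hp, interpolate_apply]
  simp only [derivative_sum, derivative_C_mul, eval_finsetSum, eval_mul, eval_C]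

variable [Fintype ι]

noncomputable def derivativeMatrix (v : ι → F) : Matrix ι ι F :=
  of fun i k => eval (v i) (derivative (Lagrange.basis univ v k))

theorem derivativeMatrix_apply (v : ι → F) (i k : ι) :
    derivativeMatrix v i k = eval (v i) (derivative (Lagrange.basis univ v k)) :=
  rfl

theorem derivativeMatrix_mul_vandermonde {n : ℕ} {v : Fin n → F} (hv : Function.Injective v) :
    derivativeMatrix v * vandermonde v =
      of fun i (j : Fin n) => ((j : ℕ) : F) * v i ^ ((j : ℕ) - 1) := by
  ext i j
  have hdeg : (X ^ (j : ℕ) : F[X]).degree < #(univ : Finset (Fin n)) := by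
    rw [degree_X_pow, card_univ, Fintype.card_fin]
    exact_mod_cast j.isLt
  have := eval_derivative_eq_sum hv.injOn hdeg (v i)
  simp only [derivative_X_pow, eval_mul, eval_C, eval_pow, eval_X] at this
  rw [mul_apply, of_apply, this]
  simp only [derivativeMatrix_apply, vandermonde_apply, mul_comm]

theorem diagonal_mul_derivativeMatrix_mul_vandermonde {n : ℕ} {v : Fin n → F}
    (hv : Function.Injective v) :
    diagonal v * derivativeMatrix v * vandermonde v =
      of fun i (j : Fin n) => ((j : ℕ) : F) * v i ^ (j : ℕ) := by
  ext i j
  rw [Matrix.mul_assoc, derivativeMatrix_mul_vandermonde hv, diagonal_mul, of_apply, of_apply]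
  rcases Nat.eq_zero_or_pos j with hj | hj
  · simp [hj]
  · rw [mul_left_comm, mul_pow_sub_one hj.ne']

theorem diagonal_prod_sub_mul_eq_diagonal_mul_derivativeMatrix_mul (hv : Function.Injective v) :
    diagonal (fun i => ∏ j ∈ univ.erase i, (v i - v j)) *
        of (fun i k => if i = k then v i * ∑ j ∈ univ.erase i, 1 / (v i - v j)
          else v i / (v i - v k)) =
      diagonal v * derivativeMatrix v *
        diagonal (fun i => ∏ j ∈ univ.erase i, (v i - v j)) := by
  ext i k
  rw [diagonal_mul, mul_diagonal, diagonal_mul, of_apply, derivativeMatrix_apply]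
  by_cases hik : i = k
  · subst hik
    rw [if_pos rfl, eval_derivative_basis_self hv.injOn (mem_univ i)]
    simp only [one_div]
    ring
  · rw [if_neg hik, eval_derivative_basis_of_ne hv.injOn (mem_univ i) (mem_univ k) hik]
    field_simp [sub_ne_zero.2 (hv.ne hik), prod_erase_sub_ne_zero hv.injOn (mem_univ k)]

end Lagrange

open Lagrange

theorem stmt_14_general (N : ℕ) (Q : Fin N → ℂ) (hQdist : Function.Injective Q)
    (a : Fin N → ℂ)
    (S Sbar A B D Zd : Matrix (Fin N) (Fin N) ℂ)
    (hS : ∀ i j, S i j = Q i ^ (j : ℕ))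
    (hSbar : ∀ i j, Sbar i j = (j : ℕ) * Q i ^ (j : ℕ))
    (hA : A = Matrix.diagonal a)
    (hB : B = Matrix.diagonal (fun i => Q i * ∑ s ∈ univ.erase i, 1 / (Q i - Q s)))
    (hD : D = Matrix.diagonal (fun i => ∏ s ∈ univ.erase i, (Q i - Q s)))
    (hZd : ∀ i j, Zd i j = if i = j then a i else Q i / (Q j - Q i)) :
    A + B - D⁻¹ * Sbar * S⁻¹ * D = Zd := by
  have hDunit : IsUnit D.det := by
    rw [hD, det_diagonal, isUnit_iff_ne_zero]
    exact prod_ne_zero_iff.2 fun i _ => prod_erase_sub_ne_zero hQdist.injOn (mem_univ i)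
  have hSv : S = vandermonde Q := ext hS
  have hSunit : IsUnit S.det := by
    rwa [hSv, isUnit_iff_ne_zero, det_vandermonde_ne_zero_iff]
  have hSbarv : Sbar = diagonal Q * derivativeMatrix Q * S := by
    rw [hSv, diagonal_mul_derivativeMatrix_mul_vandermonde hQdist]
    exact ext hSbar
  have hconj : D * (A + B - Zd) = diagonal Q * derivativeMatrix Q * D := by
    rw [hD, ← diagonal_prod_sub_mul_eq_diagonal_mul_derivativeMatrix_mul hQdist]
    congr 1
    ext i k
    by_cases hik : i = k
    · simp [hA, hB, hZd, hik]
    · rw [Matrix.sub_apply, Matrix.add_apply, hA, hB, hZd, diagonal_apply_ne _ hik,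
        diagonal_apply_ne _ hik, if_neg hik, of_apply, if_neg hik, ← neg_sub (Q k) (Q i), div_neg,
        zero_add, zero_sub]
  calc A + B - D⁻¹ * Sbar * S⁻¹ * D
      = A + B - D⁻¹ * (diagonal Q * derivativeMatrix Q * D) := by
        rw [hSbarv, Matrix.mul_assoc, Matrix.mul_assoc, Matrix.mul_assoc,
          mul_nonsing_inv_cancel_left _ _ hSunit, Matrix.mul_assoc]
    _ = Zd := by rw [← hconj, nonsing_inv_mul_cancel_left _ _ hDunit, sub_sub_cancel]

/-- The conjugation identity `A + B - D⁻¹ S̄ S⁻¹ D = Z^d`, where `A = diag a`,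
`B = diag (Q i Σ_{s≠i} 1/(Q i - Q s))`, `D = diag (∏_{s≠i}(Q i - Q s))`, `S` is
the Vandermonde matrix and `S̄ i j = j Q i ^ j` (0-indexed), and `Z^d` has
diagonal entries `a i` and off-diagonal entries `Q i/(Q j - Q i)`. -/
theorem stmt_14 (N : ℕ) (Q : Fin N → ℂ) (hQdist : Function.Injective Q)
    (hQ0 : ∀ i, Q i ≠ 0) (a : Fin N → ℂ)
    (S Sbar A B D Zd : Matrix (Fin N) (Fin N) ℂ)
    (hS : ∀ i j, S i j = Q i ^ (j : ℕ))
    (hSbar : ∀ i j, Sbar i j = (j : ℕ) * Q i ^ (j : ℕ))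
    (hA : A = Matrix.diagonal a)
    (hB : B = Matrix.diagonal (fun i => Q i * ∑ s ∈ univ.erase i, 1 / (Q i - Q s)))
    (hD : D = Matrix.diagonal (fun i => ∏ s ∈ univ.erase i, (Q i - Q s)))
    (hZd : ∀ i j, Zd i j = if i = j then a i else Q i / (Q j - Q i)) :
    A + B - D⁻¹ * Sbar * S⁻¹ * D = Zd :=
  stmt_14_general N Q hQdist a S Sbar A B D Zd hS hSbar hA hB hD hZd
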